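/- Let A be a symmetric generalized Cartan matrix indexed by I and let a be an admissible automorphism of the corresponding graph (i.e., a permutation of I preserving the number of edges between vertices, such that no edge joins two vertices in the same a-orbit). Define a matrix C indexed by the set I of a-orbits by c_{ii} = 2 and, for distinct orbits i ≠ j, c_{ij} = m_{ij}/d_i, where m_{ij} = -#{edges joining a vertex in orbit i and a vertex in orbit j} and d_i = #(orbit i). Then C is a symmetrizable generalized Cartan matrix, symmetrized by D = diag(d_i): i.e., C has integer entries, c_{ii} = 2, c_{ij} ≤ 0 for i ≠ j, c_{ij} = 0 iff c_{ji} = 0, and DC is symmetric. -/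

import Mathlib

open scoped Classical

/-- `i` and `j` lie in the same orbit of the automorphism `a`. -/
def SameOrbit {I : Type} (a : Equiv.Perm I) (i j : I) : Prop := ∃ n : ℤ, (a ^ n) i = j

/-- The size `d_𝐢` of the orbit of `i`. -/
noncomputable def orbSize {I : Type} [Fintype I] (a : Equiv.Perm I) (i : I) : ℕ :=
  (Finset.univ.filter fun j => SameOrbit a i j).card

/-- The matrix `M` on orbits: `m_{𝐢𝐢} = 2 d_𝐢` and, for distinct orbits,
`m_{𝐢𝐣} = -#{edges joining the two orbits} = ∑_{p ∈ 𝐢, q ∈ 𝐣} a_{pq}`. -/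
noncomputable def orbM {I : Type} [Fintype I] (A : I → I → ℤ) (a : Equiv.Perm I)
    (i j : I) : ℤ :=
  if SameOrbit a i j then 2 * orbSize a i
  else ∑ p ∈ Finset.univ.filter (fun p => SameOrbit a i p),
        ∑ q ∈ Finset.univ.filter (fun q => SameOrbit a j q), A p q

/-- The matrix `C = D⁻¹ M` on orbits, `c_{𝐢𝐣} = m_{𝐢𝐣} / d_𝐢` (as a rational number). -/
noncomputable def orbCartan {I : Type} [Fintype I] (A : I → I → ℤ) (a : Equiv.Perm I)
    (i j : I) : ℚ :=
  (orbM A a i j : ℚ) / (orbSize a i : ℚ)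

section OrbAux

variable {I : Type} [Fintype I]

lemma so_refl (a : Equiv.Perm I) (i : I) : SameOrbit a i i := ⟨0, rfl⟩

lemma so_symm {a : Equiv.Perm I} {i j : I} : SameOrbit a i j → SameOrbit a j i := by
  rintro ⟨n, rfl⟩
  refine ⟨-n, ?_⟩
  rw [← Equiv.Perm.mul_apply, ← zpow_add, neg_add_cancel, zpow_zero, Equiv.Perm.one_apply]

lemma so_trans {a : Equiv.Perm I} {i j k : I} :
    SameOrbit a i j → SameOrbit a j k → SameOrbit a i k := by
  rintro ⟨n, rfl⟩ ⟨m, rfl⟩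
  exact ⟨m + n, by rw [zpow_add, Equiv.Perm.mul_apply]⟩

lemma so_apply (a : Equiv.Perm I) (q : I) : SameOrbit a q (a q) := ⟨1, by rw [zpow_one]⟩

lemma so_congr {a : Equiv.Perm I} {i i' j j' : I} (h1 : SameOrbit a i i')
    (h2 : SameOrbit a j j') : SameOrbit a i j ↔ SameOrbit a i' j' :=
  ⟨fun h => so_trans (so_symm h1) (so_trans h h2),
   fun h => so_trans h1 (so_trans h (so_symm h2))⟩

lemma orb_eq {a : Equiv.Perm I} {i i' : I} (h : SameOrbit a i i') :
    (Finset.univ.filter fun j => SameOrbit a i j)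
      = (Finset.univ.filter fun j => SameOrbit a i' j) := by
  ext j
  simp only [Finset.mem_filter, Finset.mem_univ, true_and]
  exact so_congr h (so_refl a j)

lemma orbSize_eq {a : Equiv.Perm I} {i i' : I} (h : SameOrbit a i i') :
    orbSize a i = orbSize a i' := by
  unfold orbSize; rw [orb_eq h]

lemma orbSize_pos (a : Equiv.Perm I) (i : I) : 0 < orbSize a i :=
  Finset.card_pos.mpr ⟨i, Finset.mem_filter.mpr ⟨Finset.mem_univ i, so_refl a i⟩⟩

lemma sum_orb_comp (a : Equiv.Perm I) (j : I) (f : I → ℤ) :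
    (∑ q ∈ Finset.univ.filter fun q => SameOrbit a j q, f (a q))
      = ∑ q ∈ Finset.univ.filter fun q => SameOrbit a j q, f q := by
  refine Finset.sum_equiv a (fun q => ?_) (fun q _ => rfl)
  simp only [Finset.mem_filter, Finset.mem_univ, true_and]
  exact so_congr (so_refl a j) (so_apply a q)

lemma S_apply (A : I → I → ℤ) (a : Equiv.Perm I) (haut : ∀ i j, A (a i) (a j) = A i j)
    (j p : I) :
    (∑ q ∈ Finset.univ.filter fun q => SameOrbit a j q, A (a p) q)
      = ∑ q ∈ Finset.univ.filter fun q => SameOrbit a j q, A p q := by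
  rw [← sum_orb_comp a j (fun q => A (a p) q)]
  exact Finset.sum_congr rfl fun q _ => haut p q

lemma S_const (A : I → I → ℤ) (a : Equiv.Perm I) (haut : ∀ i j, A (a i) (a j) = A i j)
    {i p : I} (h : SameOrbit a i p) (j : I) :
    (∑ q ∈ Finset.univ.filter fun q => SameOrbit a j q, A p q)
      = ∑ q ∈ Finset.univ.filter fun q => SameOrbit a j q, A i q := by
  obtain ⟨n, rfl⟩ := h
  induction n using Int.induction_on with
  | zero => simp only [zpow_zero, Equiv.Perm.coe_one, id_eq]
  | succ n ih =>
      have h1 : (a ^ ((n : ℤ) + 1)) i = a ((a ^ (n : ℤ)) i) := by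
        rw [show (n : ℤ) + 1 = 1 + (n : ℤ) by ring, zpow_one_add, Equiv.Perm.mul_apply]
      rw [h1, S_apply A a haut j, ih]
  | pred n ih =>
      have h1 : a ((a ^ (-(n : ℤ) - 1)) i) = (a ^ (-(n : ℤ))) i := by
        rw [← Equiv.Perm.mul_apply, ← zpow_one_add,
          show 1 + (-(n : ℤ) - 1) = -(n : ℤ) by ring]
      rw [← S_apply A a haut j ((a ^ (-(n : ℤ) - 1)) i), h1, ih]

lemma orbM_off (A : I → I → ℤ) (a : Equiv.Perm I) (haut : ∀ i j, A (a i) (a j) = A i j)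
    {i j : I} (h : ¬ SameOrbit a i j) :
    orbM A a i j = (orbSize a i : ℤ)
      * ∑ q ∈ Finset.univ.filter fun q => SameOrbit a j q, A i q := by
  unfold orbM
  rw [if_neg h]
  rw [Finset.sum_congr rfl (fun p hp =>
    S_const A a haut (Finset.mem_filter.mp hp).2 j)]
  rw [Finset.sum_const, nsmul_eq_mul]
  rfl

lemma orbM_symm (A : I → I → ℤ) (a : Equiv.Perm I) (hsym : ∀ i j, A i j = A j i)
    (i j : I) : orbM A a i j = orbM A a j i := by
  unfold orbM
  by_cases h : SameOrbit a i j
  · rw [if_pos h, if_pos (so_symm h), orbSize_eq h]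
  · rw [if_neg h, if_neg (fun h' => h (so_symm h')), Finset.sum_comm]
    exact Finset.sum_congr rfl fun q _ => Finset.sum_congr rfl fun p _ => hsym p q

end OrbAux

/-- let `A` be a symmetric generalized Cartan matrix and `a` an
admissible automorphism of the corresponding graph.  Then the orbit matrix
`C = D⁻¹ M` is a symmetrizable generalized Cartan matrix, symmetrized by
`D = diag(d_𝐢)`: it is well defined on orbits, has integer entries, `c_{𝐢𝐢} = 2`,
`c_{𝐢𝐣} ≤ 0` for `𝐢 ≠ 𝐣`, `c_{𝐢𝐣} = 0 ↔ c_{𝐣𝐢} = 0`, and `DC` is symmetric. -/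
theorem orbCartan_is_symmetrizable_GCM {I : Type} [Fintype I] [Nonempty I]
    (A : I → I → ℤ) (a : Equiv.Perm I)
    (hsym : ∀ i j, A i j = A j i) (hdiag : ∀ i, A i i = 2)
    (hoff : ∀ i j, i ≠ j → A i j ≤ 0)
    (haut : ∀ i j, A (a i) (a j) = A i j)
    (hadm : ∀ i j, SameOrbit a i j → i ≠ j → A i j = 0) :
    -- `C` is well defined on orbits
    (∀ i i' j j', SameOrbit a i i' → SameOrbit a j j' →
        orbCartan A a i j = orbCartan A a i' j')
    -- integer entries
    ∧ (∀ i j, ∃ z : ℤ, orbCartan A a i j = (z : ℚ))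
    -- diagonal entries are `2`
    ∧ (∀ i, orbCartan A a i i = 2)
    -- off-diagonal entries are `≤ 0`
    ∧ (∀ i j, ¬ SameOrbit a i j → orbCartan A a i j ≤ 0)
    -- `c_{𝐢𝐣} = 0` iff `c_{𝐣𝐢} = 0`
    ∧ (∀ i j, orbCartan A a i j = 0 ↔ orbCartan A a j i = 0)
    -- `D C` is symmetric
    ∧ (∀ i j, (orbSize a i : ℚ) * orbCartan A a i j
        = (orbSize a j : ℚ) * orbCartan A a j i) := by
  have dpos : ∀ i : I, (0 : ℚ) < (orbSize a i : ℚ) := fun i => by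
    exact_mod_cast orbSize_pos a i
  have dne : ∀ i : I, (orbSize a i : ℚ) ≠ 0 := fun i => ne_of_gt (dpos i)
  -- value in the same-orbit case
  have cdiag : ∀ i j : I, SameOrbit a i j → orbCartan A a i j = 2 := by
    intro i j h
    unfold orbCartan orbM
    rw [if_pos h]
    push_cast
    rw [mul_div_assoc, div_self (dne i), mul_one]
  -- value in the distinct-orbit case
  have coff : ∀ i j : I, ¬ SameOrbit a i j →
      orbCartan A a i j
        = ((∑ q ∈ Finset.univ.filter fun q => SameOrbit a j q, A i q : ℤ) : ℚ) := by
    intro i j h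
    unfold orbCartan
    rw [orbM_off A a haut h]
    push_cast
    rw [mul_comm, mul_div_assoc, div_self (dne i), mul_one]
  refine ⟨?_, ?_, ?_, ?_, ?_, ?_⟩
  · -- well defined on orbits
    intro i i' j j' hii' hjj'
    have hm : orbM A a i j = orbM A a i' j' := by
      unfold orbM
      by_cases h : SameOrbit a i j
      · rw [if_pos h, if_pos ((so_congr hii' hjj').mp h)]
        rw [orbSize_eq hii']
      · rw [if_neg h, if_neg (fun h' => h ((so_congr hii' hjj').mpr h')),
          orb_eq hii', orb_eq hjj']
    unfold orbCartan
    rw [hm, orbSize_eq hii']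
  · -- integer entries
    intro i j
    by_cases h : SameOrbit a i j
    · exact ⟨2, by rw [cdiag i j h]; norm_num⟩
    · exact ⟨_, coff i j h⟩
  · -- diagonal entries are 2
    intro i
    exact cdiag i i (so_refl a i)
  · -- off-diagonal ≤ 0
    intro i j h
    have hm : orbM A a i j ≤ 0 := by
      unfold orbM
      rw [if_neg h]
      refine Finset.sum_nonpos fun p hp => Finset.sum_nonpos fun q hq => ?_
      refine hoff p q fun hpq => h ?_
      have h1 : SameOrbit a i p := (Finset.mem_filter.mp hp).2
      have h2 : SameOrbit a j q := (Finset.mem_filter.mp hq).2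
      exact so_trans h1 (so_symm (hpq ▸ h2))
    unfold orbCartan
    exact div_nonpos_iff.mpr (Or.inr ⟨by exact_mod_cast hm, (dpos i).le⟩)
  · -- zero iff zero
    have key : ∀ i j : I, (orbCartan A a i j = 0 ↔ orbM A a i j = 0) := by
      intro i j
      unfold orbCartan
      rw [div_eq_zero_iff]
      constructor
      · rintro (h | h)
        · exact_mod_cast h
        · exact absurd h (dne i)
      · intro h
        exact Or.inl (by exact_mod_cast h)
    intro i j
    rw [key, key, orbM_symm A a hsym]
  · -- DC symmetric
    intro i j
    unfold orbCartan
    rw [mul_comm, mul_comm ((orbSize a j : ℚ)), div_mul_cancel₀ _ (dne i),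
      div_mul_cancel₀ _ (dne j)]
    exact_mod_cast orbM_symm A a hsym i j
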